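/- arXiv:2601.13001 — 4 statements merged into one kernel-verified Lean document; each statement's English description precedes it below -/
import Mathlib

section
/- Let q ∈ (0,1), c > 0, let N be a nonempty finite set with d = |N|, let a : N → ℝ satisfy a j ∈ {−1, 1} for every j ∈ N, let z : N → ℝ, and let s ∈ ℝ. Set w = ∑_{j ∈ N} (a j)·(z j), let ρ_q(r) = q·r if r ≥ 0 and (q−1)·r if r < 0, and define g(x) = ρ_q(x − s) + ∑_{j ∈ N} ( z j · (a j) · x + (c/2) · ((a j) · x)² ). Then g has a unique global minimizer x* over ℝ, given by: x* = (−q − w)/(c·d) if (−q − w)/(c·d) > s; x* = (1 − q − w)/(c·d) if (1 − q − w)/(c·d) < s; and x* = s otherwise. -/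
private lemma quantA (q C s w X y : ℝ) (hq1 : q < 1)
    (hXs : s < X) (hX : C * X = -q - w) :
    (if 0 ≤ X - s then q * (X - s) else (q - 1) * (X - s)) + w * X + C / 2 * X ^ 2
      + C / 2 * (y - X) ^ 2
    ≤ (if 0 ≤ y - s then q * (y - s) else (q - 1) * (y - s)) + w * y + C / 2 * y ^ 2 := by
  rw [if_pos (by linarith : (0:ℝ) ≤ X - s)]
  split_ifs with h <;> nlinarith [sq_nonneg (y - X)]

private lemma quantB (q C s w X y : ℝ) (hq0 : 0 < q)
    (hXs : X < s) (hX : C * X = 1 - q - w) :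
    (if 0 ≤ X - s then q * (X - s) else (q - 1) * (X - s)) + w * X + C / 2 * X ^ 2
      + C / 2 * (y - X) ^ 2
    ≤ (if 0 ≤ y - s then q * (y - s) else (q - 1) * (y - s)) + w * y + C / 2 * y ^ 2 := by
  rw [if_neg (by linarith : ¬ (0:ℝ) ≤ X - s)]
  split_ifs with h <;> nlinarith [sq_nonneg (y - X)]

private lemma quantC (q C s w y : ℝ)
    (hb1 : -q - w ≤ C * s) (hb2 : C * s ≤ 1 - q - w) :
    (if 0 ≤ s - s then q * (s - s) else (q - 1) * (s - s)) + w * s + C / 2 * s ^ 2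
      + C / 2 * (y - s) ^ 2
    ≤ (if 0 ≤ y - s then q * (y - s) else (q - 1) * (y - s)) + w * y + C / 2 * y ^ 2 := by
  rw [if_pos (by linarith : (0:ℝ) ≤ s - s)]
  split_ifs with h
  · nlinarith [mul_nonneg h (show (0:ℝ) ≤ q + w + C * s by linarith)]
  · nlinarith [mul_nonneg (by linarith : (0:ℝ) ≤ s - y)
      (show (0:ℝ) ≤ -(q - 1 + w + C * s) by linarith)]

/-- Closed-form PDMM x-update for quantile consensus: with `w = ∑ a j * z j` and
quantile loss `ρ_q`, the function `g(x) = ρ_q(x - s) + ∑ (z j * a j * x + (c/2)(a j * x)²)`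
has a unique global minimizer, given by the piecewise formula of the paper. -/
theorem stmt_7 {ι : Type*} (q : ℝ) (hq : q ∈ Set.Ioo (0 : ℝ) 1) (c : ℝ) (hc : 0 < c)
    (N : Finset ι) (hN : N.Nonempty)
    (a z : ι → ℝ) (ha : ∀ j ∈ N, a j = -1 ∨ a j = 1) (s : ℝ) :
    let d : ℝ := N.card
    let w : ℝ := ∑ j ∈ N, a j * z j
    let ρ : ℝ → ℝ := fun r => if 0 ≤ r then q * r else (q - 1) * r
    let g : ℝ → ℝ := fun x => ρ (x - s) + ∑ j ∈ N, (z j * a j * x + (c / 2) * (a j * x) ^ 2)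
    let xstar : ℝ :=
      if (-q - w) / (c * d) > s then (-q - w) / (c * d)
      else if (1 - q - w) / (c * d) < s then (1 - q - w) / (c * d)
      else s
    ∀ x : ℝ, g xstar ≤ g x ∧ (g x = g xstar → x = xstar) := by
  intro d w ρ g xstar
  obtain ⟨hq0, hq1⟩ := hq
  have hd : (0 : ℝ) < d := by
    show (0 : ℝ) < (N.card : ℝ)
    exact_mod_cast Finset.card_pos.mpr hN
  have hC : 0 < c * d := mul_pos hc hd
  have hg : ∀ y, g y = ρ (y - s) + w * y + (c * d / 2) * y ^ 2 := by
    intro y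
    show ρ (y - s) + ∑ j ∈ N, (z j * a j * y + (c / 2) * (a j * y) ^ 2) = _
    have h1 : ∀ j ∈ N, z j * a j * y + (c / 2) * (a j * y) ^ 2
        = (a j * z j) * y + c / 2 * y ^ 2 := by
      intro j hj
      rcases ha j hj with h | h <;> rw [h] <;> ring
    rw [Finset.sum_congr rfl h1, Finset.sum_add_distrib, ← Finset.sum_mul,
      Finset.sum_const, nsmul_eq_mul]
    show _ = ρ (y - s) + (∑ j ∈ N, a j * z j) * y + (c * (N.card : ℝ) / 2) * y ^ 2
    ring
  have hx : xstar = if (-q - w) / (c * d) > s then (-q - w) / (c * d)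
      else if (1 - q - w) / (c * d) < s then (1 - q - w) / (c * d) else s := rfl
  have hmain : ∀ y, g xstar + (c * d / 2) * (y - xstar) ^ 2 ≤ g y := by
    intro y
    rw [hg y, hg xstar]
    by_cases hA : (-q - w) / (c * d) > s
    · have hXeq : xstar = (-q - w) / (c * d) := by rw [hx, if_pos hA]
      rw [hXeq]
      exact quantA q (c * d) s w _ y hq1 hA (by field_simp)
    · by_cases hB : (1 - q - w) / (c * d) < s
      · have hXeq : xstar = (1 - q - w) / (c * d) := by rw [hx, if_neg hA, if_pos hB]
        rw [hXeq]
        exact quantB q (c * d) s w _ y hq0 hB (by field_simp)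
      · have hXeq : xstar = s := by rw [hx, if_neg hA, if_neg hB]
        rw [hXeq]
        have hb1 : -q - w ≤ c * d * s := by
          have h := (div_le_iff₀ hC).mp (not_lt.mp hA)
          linarith [mul_comm s (c * d)]
        have hb2 : c * d * s ≤ 1 - q - w := by
          have h := (le_div_iff₀ hC).mp (not_lt.mp hB)
          linarith [mul_comm s (c * d)]
        exact quantC q (c * d) s w y hb1 hb2
  intro x
  have h0 : (0:ℝ) ≤ c * d / 2 * (x - xstar) ^ 2 := by positivity
  refine ⟨le_trans (le_add_of_nonneg_right h0) (hmain x), fun hxg => ?_⟩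
  rcases eq_or_ne x xstar with h | h
  · exact h
  · exfalso
    have hne : x - xstar ≠ 0 := sub_ne_zero.mpr h
    have hp : (0:ℝ) < c * d / 2 * (x - xstar) ^ 2 := by positivity
    have h2 := hmain x
    rw [hxg] at h2
    exact absurd h2 (by linarith [lt_add_of_pos_right (g xstar) hp])
end

section
/- Let c > 0, let N be a nonempty finite set with d = |N|, let a : N → ℝ satisfy a j ∈ {−1, 1} for every j ∈ N, let z : N → ℝ, and let s ∈ ℝ. Set w = ∑_{j ∈ N} (a j)·(z j) and define g(x) = |x − s| + ∑_{j ∈ N} ( z j · (a j) · x + (c/2) · ((a j) · x)² ). Then s is the unique global minimizer of g over ℝ if and only if s lies in the closed interval [(−1 − w)/(c·d), (1 − w)/(c·d)]; moreover this interval is nonempty and has length 2/(c·d). -/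
/-- Matching (leakage) event of the median-consensus PDMM x-update: `s` is the unique
global minimizer of `g` iff `s` lies in the window `[(-1-w)/(cd), (1-w)/(cd)]`, which
is a nonempty interval of length `2/(cd)`. -/
theorem stmt_8 {ι : Type*} (c : ℝ) (hc : 0 < c) (N : Finset ι) (hN : N.Nonempty)
    (a z : ι → ℝ) (ha : ∀ j ∈ N, a j = -1 ∨ a j = 1) (s : ℝ) :
    let d : ℝ := N.card
    let w : ℝ := ∑ j ∈ N, a j * z j
    let g : ℝ → ℝ := fun x => |x - s| + ∑ j ∈ N, (z j * a j * x + (c / 2) * (a j * x) ^ 2)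
    ((∀ x : ℝ, x ≠ s → g s < g x) ↔
       s ∈ Set.Icc ((-1 - w) / (c * d)) ((1 - w) / (c * d))) ∧
    (-1 - w) / (c * d) ≤ (1 - w) / (c * d) ∧
    (1 - w) / (c * d) - (-1 - w) / (c * d) = 2 / (c * d) := by
  intro d w g
  have hdd : d = (N.card : ℝ) := rfl
  have hd : (0 : ℝ) < d := by
    rw [hdd]; exact_mod_cast Finset.card_pos.mpr hN
  have hK : 0 < c * d := mul_pos hc hd
  set m : ℝ := w + c * d * s with hm
  have hg : ∀ x : ℝ, g x = |x - s| + w * x + (c * d / 2) * x ^ 2 := by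
    intro x
    show |x - s| + ∑ j ∈ N, (z j * a j * x + (c / 2) * (a j * x) ^ 2) = _
    have h1 : ∑ j ∈ N, (z j * a j * x + (c / 2) * (a j * x) ^ 2)
        = (∑ j ∈ N, a j * z j) * x + (c * d / 2) * x ^ 2 := by
      rw [Finset.sum_add_distrib, Finset.sum_mul]
      congr 1
      · exact Finset.sum_congr rfl fun j hj => by ring
      · rw [Finset.sum_congr rfl (fun j hj => show (c / 2) * (a j * x) ^ 2 = c / 2 * x ^ 2 by
            rcases ha j hj with h | h <;> rw [h] <;> ring),
          Finset.sum_const, nsmul_eq_mul, hdd]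
        ring
    rw [h1]
    ring
  have hdiff : ∀ x : ℝ, g x - g s = |x - s| + m * (x - s) + (c * d / 2) * (x - s) ^ 2 := by
    intro x
    rw [hg x, hg s]
    have : |s - s| = 0 := by simp
    rw [this, hm]
    ring
  clear_value m d w g
  have hmem : s ∈ Set.Icc ((-1 - w) / (c * d)) ((1 - w) / (c * d)) ↔ -1 ≤ m ∧ m ≤ 1 := by
    rw [Set.mem_Icc, div_le_iff₀ hK, le_div_iff₀ hK, hm]
    constructor <;> rintro ⟨h1, h2⟩ <;> constructor <;> nlinarith
  constructor
  · constructor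
    · intro H
      rw [hmem]
      constructor
      · by_contra hlt
        push_neg at hlt
        set t : ℝ := -(m + 1) / (c * d) with ht
        have htpos : 0 < t := by
          apply div_pos _ hK; linarith
        have hx : s + t ≠ s := by
          intro h; nlinarith
        have := H (s + t) hx
        have hd2 : g (s + t) - g s = |t| + m * t + (c * d / 2) * t ^ 2 := by
          rw [hdiff]; ring_nf
        rw [abs_of_pos htpos] at hd2
        have hneg : g (s + t) - g s < 0 := by
          rw [hd2, ht]
          have h1 : -(m + 1) / (c * d) = -(m + 1) * (c * d)⁻¹ := by ring
          rw [h1]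
          have hKi : 0 < (c * d)⁻¹ := inv_pos.mpr hK
          have hKK : (c * d) * (c * d)⁻¹ = 1 := mul_inv_cancel₀ hK.ne'
          nlinarith [sq_nonneg (m + 1), mul_pos hKi hKi]
        linarith
      · by_contra hlt
        push_neg at hlt
        set t : ℝ := -(m - 1) / (c * d) with ht
        have htneg : t < 0 := by
          apply div_neg_of_neg_of_pos _ hK; linarith
        have hx : s + t ≠ s := by
          intro h; nlinarith
        have := H (s + t) hx
        have hd2 : g (s + t) - g s = |t| + m * t + (c * d / 2) * t ^ 2 := by
          rw [hdiff]; ring_nf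
        rw [abs_of_neg htneg] at hd2
        have hneg : g (s + t) - g s < 0 := by
          rw [hd2, ht]
          have h1 : -(m - 1) / (c * d) = -(m - 1) * (c * d)⁻¹ := by ring
          rw [h1]
          have hKi : 0 < (c * d)⁻¹ := inv_pos.mpr hK
          have hKK : (c * d) * (c * d)⁻¹ = 1 := mul_inv_cancel₀ hK.ne'
          nlinarith [sq_nonneg (m - 1), mul_pos hKi hKi]
        linarith
    · intro hs x hx
      rw [hmem] at hs
      have ht : x - s ≠ 0 := sub_ne_zero.mpr hx
      have h1 : 0 < g x - g s := by
        rw [hdiff]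
        have habs : m * (x - s) ≥ -|x - s| := by
          rcases le_or_gt 0 (x - s) with h | h
          · rw [abs_of_nonneg h]; nlinarith [hs.1]
          · rw [abs_of_neg h]; nlinarith [hs.2]
        have hsq : 0 < c * d / 2 * (x - s) ^ 2 := by positivity
        linarith [abs_nonneg (x - s)]
      linarith
  · constructor
    · gcongr
      · linarith
    · field_simp
      ring
end

section
/- Let c > 0, let N be a nonempty finite set with d = |N|, and for each k ∈ N let α k ∈ {−1, 1} be given. For each k ∈ N let u_k, v_k, x_k : ℕ → ℝ and let xj : ℕ → ℝ be sequences satisfying, for all t ≥ 0, the averaged PDMM dual updates u_k(t+1) = (1/2)·u_k(t) + (1/2)·( v_k(t) + 2·c·(−α k)·x_k(t) ) and v_k(t+1) = (1/2)·v_k(t) + (1/2)·( u_k(t) + 2·c·(α k)·xj(t) ). Suppose that at times t and t+1 (for some t ≥ 1) the primal iterate of node j satisfies the linear-regime formula xj(τ) = ( −1 − ∑_{k ∈ N} (α k)·u_k(τ) ) / (c·d) for τ = t and τ = t+1. Then xj(t+1) = xj(t) + (1/d)·∑_{k ∈ N} ( x_k(t) − (1/2)·x_k(t−1) − (1/2)·xj(t−1)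 ). -/
/-- Reconstruction step in the privacy analysis of PDMM maximum consensus: if node `j`
stays in the linear regime at times `t` and `t+1`, then its next primal iterate is a
fixed linear function of the neighboring primal iterates. -/
theorem stmt_10 {ι : Type*} (c : ℝ) (hc : 0 < c) (N : Finset ι) (hN : N.Nonempty)
    (α : ι → ℝ) (hα : ∀ k ∈ N, α k = -1 ∨ α k = 1)
    (u v x : ι → ℕ → ℝ) (xj : ℕ → ℝ)
    (hu : ∀ k ∈ N, ∀ t : ℕ,
      u k (t + 1) = (1 / 2) * u k t + (1 / 2) * (v k t + 2 * c * (-(α k)) * x k t))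
    (hv : ∀ k ∈ N, ∀ t : ℕ,
      v k (t + 1) = (1 / 2) * v k t + (1 / 2) * (u k t + 2 * c * (α k) * xj t))
    (t : ℕ) (ht : 1 ≤ t)
    (hlin_t : xj t = (-1 - ∑ k ∈ N, α k * u k t) / (c * (N.card : ℝ)))
    (hlin_t1 : xj (t + 1) = (-1 - ∑ k ∈ N, α k * u k (t + 1)) / (c * (N.card : ℝ))) :
    xj (t + 1) = xj t +
      (1 / (N.card : ℝ)) *
        ∑ k ∈ N, (x k t - (1 / 2) * x k (t - 1) - (1 / 2) * xj (t - 1)) := by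
  obtain ⟨s, rfl⟩ : ∃ s, t = s + 1 := ⟨t - 1, (Nat.succ_pred_eq_of_pos ht).symm⟩
  have hcard : (0 : ℝ) < (N.card : ℝ) := by
    exact_mod_cast Nat.pos_of_ne_zero (Finset.card_ne_zero_of_mem hN.choose_spec)
  have hd : (N.card : ℝ) ≠ 0 := ne_of_gt hcard
  have hcne : c ≠ 0 := ne_of_gt hc
  simp only [Nat.add_sub_cancel]
  have per : ∀ k ∈ N, α k * u k (s + 1 + 1) - α k * u k (s + 1)
      = -c * (x k (s + 1) - (1 / 2) * x k s - (1 / 2) * xj s) := by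
    intro k hk
    have hα2 : α k * α k = 1 := by rcases hα k hk with h | h <;> rw [h] <;> ring
    have h1 := hu k hk (s + 1)
    have h2 := hu k hk s
    have h3 := hv k hk s
    linear_combination (α k) * h1 + (α k / 2) * h3 - (α k / 2) * h2 +
      (c / 2 * xj s + c / 2 * x k s - c * x k (s + 1)) * hα2
  have hsum : ∑ k ∈ N, α k * u k (s + 1 + 1) - ∑ k ∈ N, α k * u k (s + 1)
      = -c * ∑ k ∈ N, (x k (s + 1) - (1 / 2) * x k s - (1 / 2) * xj s) := by
    rw [← Finset.sum_sub_distrib, Finset.mul_sum]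
    exact Finset.sum_congr rfl per
  have hcd : c * (N.card : ℝ) ≠ 0 := mul_ne_zero hcne hd
  have e1 : c * (N.card : ℝ) * xj (s + 1) = -1 - ∑ k ∈ N, α k * u k (s + 1) := by
    rw [hlin_t]; field_simp
  have e2 : c * (N.card : ℝ) * xj (s + 1 + 1) = -1 - ∑ k ∈ N, α k * u k (s + 1 + 1) := by
    rw [hlin_t1]; field_simp
  have key : (N.card : ℝ) * xj (s + 1 + 1) = (N.card : ℝ) * xj (s + 1) +
      ∑ k ∈ N, (x k (s + 1) - (1 / 2) * x k s - (1 / 2) * xj s) := by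
    apply mul_left_cancel₀ hcne
    linear_combination e2 - e1 - hsum
  have expand : xj (s + 1 + 1) = (1 / (N.card : ℝ)) * ((N.card : ℝ) * xj (s + 1 + 1)) := by
    rw [one_div, inv_mul_cancel_left₀ hd]
  rw [expand, key, mul_add, one_div, inv_mul_cancel_left₀ hd, ← one_div]
end

section
/- Let m ∈ ℕ, n = 2m+1, and let s : Fin n → ℝ. Define the median med(s) as the (m+1)-th smallest value of s, i.e., med(s) = (s ∘ σ) m for any permutation σ of Fin n such that s ∘ σ is monotone. Let k ∈ Fin n and let s̃ : Fin n → ℝ satisfy s̃ j = s j for every j ≠ k. If either ( s k < med(s) and s̃ k < med(s) ) or ( s k > med(s) and s̃ k > med(s) ), then med(s̃) = med(s). -/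
/-! The median `M` of `s` is characterised by counts alone: at most `m` values of `s` lie
strictly below `M` and at most `m` strictly above. Moving `s k` to another value on the same
side of `M` changes neither count, so `M` is also the median of `s̃`. -/

open Finset

section OrderStatistic

variable {α : Type*} [LinearOrder α] {n : ℕ}

lemma card_filter_comp_perm (σ : Equiv.Perm (Fin n)) (p : Fin n → Prop) [DecidablePred p] :
    #{i | p (σ i)} = #{i | p i} :=
  card_equiv σ (by simp)

theorem Monotone.apply_eq_iff_card_lt_le_and_card_gt_le {g : Fin n → α} (hg : Monotone g)
    (i : Fin n) (x : α) :
    g i = x ↔ #{j | g j < x} ≤ i ∧ #{j | x < g j} ≤ n - 1 - i := by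
  constructor
  · rintro rfl
    constructor
    · calc #{j | g j < g i} ≤ #(Iio i) :=
            card_le_card fun j hj => mem_Iio.2 (hg.reflect_lt (mem_filter.1 hj).2)
        _ = i := Fin.card_Iio i
    · calc #{j | g i < g j} ≤ #(Ioi i) :=
            card_le_card fun j hj => mem_Ioi.2 (hg.reflect_lt (mem_filter.1 hj).2)
        _ = n - 1 - i := Fin.card_Ioi i
  · rintro ⟨hbelow, habove⟩
    rcases lt_trichotomy (g i) x with hlt | heq | hgt
    · have : #(Iic i) ≤ #{j | g j < x} :=
        card_le_card fun j hj => mem_filter.2 ⟨mem_univ j, (hg (mem_Iic.1 hj)).trans_lt hlt⟩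
      rw [Fin.card_Iic] at this
      omega
    · exact heq
    · have : #(Ici i) ≤ #{j | x < g j} :=
        card_le_card fun j hj => mem_filter.2 ⟨mem_univ j, hgt.trans_le (hg (mem_Ici.1 hj))⟩
      rw [Fin.card_Ici] at this
      omega

theorem apply_perm_eq_iff_card_lt_le_and_card_gt_le {f : Fin n → α} {σ : Equiv.Perm (Fin n)}
    (hσ : Monotone (f ∘ σ)) (i : Fin n) (x : α) :
    f (σ i) = x ↔ #{j | f j < x} ≤ i ∧ #{j | x < f j} ≤ n - 1 - i := by
  rw [← card_filter_comp_perm σ (fun j => f j < x), ← card_filter_comp_perm σ (fun j => x < f j)]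
  exact hσ.apply_eq_iff_card_lt_le_and_card_gt_le i x

end OrderStatistic

lemma card_filter_eq_of_forall_ne {ι β : Type*} [Fintype ι] {f g : ι → β} {k : ι}
    (hfg : ∀ j, j ≠ k → g j = f j) (p : β → Prop) [DecidablePred p] (hk : p (g k) ↔ p (f k)) :
    #{j | p (g j)} = #{j | p (f j)} := by
  congr 1
  refine filter_congr fun j _ => ?_
  by_cases hj : j = k
  · rw [hj, hk]
  · rw [hfg j hj]

/-- Median invariance under same-side changes: if `s̃` agrees with `s` except at `k`,
and both `s k` and `s̃ k` lie strictly on the same side of the median of `s`, then the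
median is unchanged. Here the median of a `(2m+1)`-tuple is its `(m+1)`-th smallest
value, obtained via any sorting permutation. -/
theorem stmt_15 (m : ℕ) (s st : Fin (2 * m + 1) → ℝ) (k : Fin (2 * m + 1))
    (hst : ∀ j, j ≠ k → st j = s j)
    (σ σ' : Equiv.Perm (Fin (2 * m + 1)))
    (hσ : Monotone (s ∘ σ)) (hσ' : Monotone (st ∘ σ'))
    (hside :
      (s k < s (σ ⟨m, by omega⟩) ∧ st k < s (σ ⟨m, by omega⟩)) ∨
      (s k > s (σ ⟨m, by omega⟩) ∧ st k > s (σ ⟨m, by omega⟩))) :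
    st (σ' ⟨m, by omega⟩) = s (σ ⟨m, by omega⟩) := by
  set M := s (σ ⟨m, by omega⟩)
  have hk_below : st k < M ↔ s k < M := by
    rcases hside with ⟨hsk, hstk⟩ | ⟨hsk, hstk⟩
    · exact iff_of_true hstk hsk
    · exact iff_of_false hstk.asymm hsk.asymm
  have hk_above : M < st k ↔ M < s k := by
    rcases hside with ⟨hsk, hstk⟩ | ⟨hsk, hstk⟩
    · exact iff_of_false hstk.asymm hsk.asymm
    · exact iff_of_true hstk hsk
  obtain ⟨hs_below, hs_above⟩ := (apply_perm_eq_iff_card_lt_le_and_card_gt_le hσ _ M).1 rfl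
  refine (apply_perm_eq_iff_card_lt_le_and_card_gt_le hσ' _ M).2 ⟨?_, ?_⟩
  · rwa [card_filter_eq_of_forall_ne hst (· < M) hk_below]
  · rwa [card_filter_eq_of_forall_ne hst (M < ·) hk_above]
end
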